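/- Let L ≥ 2 and consider a fully-connected network with hidden states h_0(x) = x, h_i(x) = f∘(w_i h_{i−1}(x) + b_i) for 1 ≤ i ≤ L−1, and logits θ(x) = w_L h_{L−1}(x) + b_L, where f : ℝ → ℝ is Lipschitz with constant C ≥ 0 and applied componentwise. Then for any input x, perturbation ξ, and output index k, |θ_k(x) − θ_k(x+ξ)| ≤ C^{L−1} · (|w_L|·|w_{L−1}|⋯|w_1|·|ξ|)_k, where |·| denotes entrywise absolute value. -/

import Mathlib

/-! Entrywise, `|A u - A v| ≤ |A| |u - v|`, and `f` multiplies differences by at most `C`; so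
each hidden layer costs a factor `C |w_i|`, while the final affine layer costs only `|w_L|`. -/

/-- Hidden states of a fully-connected network: `hiddenState dims w b f i x` is `h_i(x)`,
with `h_0(x) = x` and `h_{i+1}(x) = f ∘ (w_{i+1} h_i(x) + b_{i+1})` (the paper's `w_{i+1}`
is `w i` here, i.e. the paper's 1-indexed `w_i` is the 0-indexed `w (i-1)`). -/
def hiddenState (dims : ℕ → ℕ)
    (w : (i : ℕ) → Matrix (Fin (dims (i + 1))) (Fin (dims i)) ℝ)
    (b : (i : ℕ) → Fin (dims (i + 1)) → ℝ) (f : ℝ → ℝ) :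
    (i : ℕ) → (Fin (dims 0) → ℝ) → (Fin (dims i) → ℝ)
  | 0, x => x
  | i + 1, x => fun j => f ((w i).mulVec (hiddenState dims w b f i x) j + b i j)

/-- `absChain dims w ξ i = |w_i|·|w_{i-1}|⋯|w_1|·|ξ|` (entrywise absolute values),
a vector of size `dims i`; the base case is `|ξ|`. -/
def absChain (dims : ℕ → ℕ)
    (w : (i : ℕ) → Matrix (Fin (dims (i + 1))) (Fin (dims i)) ℝ)
    (ξ : Fin (dims 0) → ℝ) :
    (i : ℕ) → (Fin (dims i) → ℝ)
  | 0 => fun j => |ξ j|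
  | i + 1 => ((w i).map (fun a => |a|)).mulVec (absChain dims w ξ i)

theorem abs_mulVec_sub_mulVec_le {R m n : Type*} [CommRing R] [LinearOrder R]
    [IsStrictOrderedRing R] [Fintype n] (A : Matrix m n R) {u v e : n → R}
    (h : ∀ l, |u l - v l| ≤ e l) (j : m) :
    |A.mulVec u j - A.mulVec v j| ≤ (A.map abs).mulVec e j := by
  rw [← Pi.sub_apply, ← Matrix.mulVec_sub]
  calc |∑ l, A j l * (u - v) l|
      ≤ ∑ l, |A j l * (u - v) l| := Finset.abs_sum_le_sum_abs _ _
    _ ≤ ∑ l, |A j l| * e l := by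
        gcongr with l
        rw [abs_mul]
        exact mul_le_mul_of_nonneg_left (h l) (abs_nonneg _)

theorem abs_hiddenState_sub_le (dims : ℕ → ℕ)
    (w : (i : ℕ) → Matrix (Fin (dims (i + 1))) (Fin (dims i)) ℝ)
    (b : (i : ℕ) → Fin (dims (i + 1)) → ℝ) {f : ℝ → ℝ} {C : ℝ} (hC : 0 ≤ C)
    (hf : ∀ s t : ℝ, |f s - f t| ≤ C * |s - t|) (x ξ : Fin (dims 0) → ℝ) (i : ℕ)
    (j : Fin (dims i)) :
    |hiddenState dims w b f i x j - hiddenState dims w b f i (x + ξ) j| ≤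
      C ^ i * absChain dims w ξ i j := by
  induction i with
  | zero => simp [hiddenState, absChain]
  | succ i ih =>
    have hlayer := abs_mulVec_sub_mulVec_le (w i) (e := C ^ i • absChain dims w ξ i) ih j
    calc |hiddenState dims w b f (i + 1) x j - hiddenState dims w b f (i + 1) (x + ξ) j|
        ≤ C * |(w i).mulVec (hiddenState dims w b f i x) j
            - (w i).mulVec (hiddenState dims w b f i (x + ξ)) j| := by
          refine (hf _ _).trans_eq ?_
          rw [add_sub_add_right_eq_sub]
      _ ≤ C * (C ^ i * absChain dims w ξ (i + 1) j) := by
          rw [Matrix.mulVec_smul] at hlayer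
          gcongr
          exact hlayer
      _ = C ^ (i + 1) * absChain dims w ξ (i + 1) j := by ring

theorem logit_perturbation_bound_general (L : ℕ) (dims : ℕ → ℕ)
    (w : (i : ℕ) → Matrix (Fin (dims (i + 1))) (Fin (dims i)) ℝ)
    (b : (i : ℕ) → Fin (dims (i + 1)) → ℝ)
    (f : ℝ → ℝ) (C : ℝ) (hC : 0 ≤ C)
    (hf : ∀ s t : ℝ, |f s - f t| ≤ C * |s - t|)
    (θ : (Fin (dims 0) → ℝ) → Fin (dims (L - 1 + 1)) → ℝ)
    (hθ : ∀ y k, θ y k =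
      (w (L - 1)).mulVec (hiddenState dims w b f (L - 1) y) k + b (L - 1) k)
    (x ξ : Fin (dims 0) → ℝ) :
    ∀ k : Fin (dims (L - 1 + 1)),
      |θ x k - θ (x + ξ) k| ≤ C ^ (L - 1) * absChain dims w ξ (L - 1 + 1) k := by
  intro k
  rw [hθ, hθ, add_sub_add_right_eq_sub]
  have hhidden := abs_hiddenState_sub_le dims w b hC hf x ξ (L - 1)
  have hlogit :=
    abs_mulVec_sub_mulVec_le (w (L - 1)) (e := C ^ (L - 1) • absChain dims w ξ (L - 1)) hhidden k
  rwa [Matrix.mulVec_smul, Pi.smul_apply, smul_eq_mul] at hlogit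

/-- For `L ≥ 2` and logits `θ(x) = w_L h_{L-1}(x) + b_L` (here `w_L`,
`b_L` are `w (L-1)`, `b (L-1)`, and the output index type is `Fin (dims (L-1+1))`,
which agrees with `Fin (dims L)` since `L ≥ 2`): for any input `x`, perturbation `ξ`
and output index `k`, `|θ_k(x) − θ_k(x+ξ)| ≤ C^{L-1} · (|w_L|·|w_{L-1}|⋯|w_1|·|ξ|)_k`. -/
theorem logit_perturbation_bound (L : ℕ) (hL : 2 ≤ L) (dims : ℕ → ℕ)
    (w : (i : ℕ) → Matrix (Fin (dims (i + 1))) (Fin (dims i)) ℝ)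
    (b : (i : ℕ) → Fin (dims (i + 1)) → ℝ)
    (f : ℝ → ℝ) (C : ℝ) (hC : 0 ≤ C)
    (hf : ∀ s t : ℝ, |f s - f t| ≤ C * |s - t|)
    (θ : (Fin (dims 0) → ℝ) → Fin (dims (L - 1 + 1)) → ℝ)
    (hθ : ∀ y k, θ y k =
      (w (L - 1)).mulVec (hiddenState dims w b f (L - 1) y) k + b (L - 1) k)
    (x ξ : Fin (dims 0) → ℝ) :
    ∀ k : Fin (dims (L - 1 + 1)),
      |θ x k - θ (x + ξ) k| ≤ C ^ (L - 1) * absChain dims w ξ (L - 1 + 1) k :=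
  logit_perturbation_bound_general L dims w b f C hC hf θ hθ x ξ
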